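/- Let A ∈ ℂ^{n×n}. Suppose (W₁, R₁, w₁', r₁) and (W₂, R₂, w₂', r₂) are Arnoldi-like decompositions of order m for A, i.e. A·W₁ = W₁·R₁ + r₁·w₁'·e_mᵀ and A·W₂ = W₂·R₂ + r₂·w₂'·e_mᵀ, and suppose the first column of W₂ equals w₁'. Let Ŵ ∈ ℂ^{n×2m} be the matrix whose first m columns are those of W₁ and whose last m columns are those of W₂, and let R̂ ∈ ℂ^{2m×2m} be the block matrix with blocks R̂ = [[R₁, 0], [r₁·e_1·e_mᵀ, R₂]] (upper-left block R₁, upper-right block 0, lower-left block r₁·e_1·e_mᵀ, lower-right block R₂). Then A·Ŵ = Ŵ·R̂ + r₂·w₂'·ê_{2m}ᵀ, where ê_{2m} is the last standard basis vector of ℂ^{2m}. -/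
import Mathlib


/-- Two Arnoldi-like decompositions of order `m` for `A`, where the second
starts from the residual vector `w₁'` of the first, can be combined into a single
Arnoldi-like decomposition of order `2m`:
`A·[W₁ W₂] = [W₁ W₂]·[[R₁, 0], [r₁·e₁·eₘᵀ, R₂]] + r₂·w₂'·ê₂ₘᵀ`. -/
theorem restarted_arnoldi_combined_decomposition {n m : ℕ} (hm : 1 ≤ m)
    (A : Matrix (Fin n) (Fin n) ℂ)
    (W₁ W₂ : Matrix (Fin n) (Fin m) ℂ) (R₁ R₂ : Matrix (Fin m) (Fin m) ℂ)
    (w₁' w₂' : Fin n → ℂ) (r₁ r₂ : ℂ)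
    (hR₁ : ∀ i j : Fin m, (j : ℕ) + 1 < (i : ℕ) → R₁ i j = 0)
    (hR₂ : ∀ i j : Fin m, (j : ℕ) + 1 < (i : ℕ) → R₂ i j = 0)
    (hdec₁ : A * W₁ = W₁ * R₁ +
      r₁ • Matrix.vecMulVec w₁' (Pi.single (⟨m - 1, by omega⟩ : Fin m) 1))
    (hdec₂ : A * W₂ = W₂ * R₂ +
      r₂ • Matrix.vecMulVec w₂' (Pi.single (⟨m - 1, by omega⟩ : Fin m) 1))
    (hcol : (fun i => W₂ i ⟨0, by omega⟩) = w₁')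
    (What : Matrix (Fin n) (Fin m ⊕ Fin m) ℂ)
    (hWhat : What = Matrix.of fun i => Sum.elim (W₁ i) (W₂ i))
    (Rhat : Matrix (Fin m ⊕ Fin m) (Fin m ⊕ Fin m) ℂ)
    (hRhat : Rhat = Matrix.fromBlocks R₁ 0
      (r₁ • Matrix.vecMulVec (Pi.single (⟨0, by omega⟩ : Fin m) 1)
        (Pi.single (⟨m - 1, by omega⟩ : Fin m) 1)) R₂) :
    A * What = What * Rhat +
      r₂ • Matrix.vecMulVec w₂'
        (Pi.single (Sum.inr (⟨m - 1, by omega⟩ : Fin m) : Fin m ⊕ Fin m) 1) := by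
  subst hWhat hRhat
  ext i j
  have h1 := congrFun (congrFun hdec₁ i)
  have h2 := congrFun (congrFun hdec₂ i)
  cases j with
  | inl j =>
    simp only [Matrix.mul_apply, Fintype.sum_sum_type, Matrix.of_apply, Sum.elim_inl,
      Sum.elim_inr, Matrix.fromBlocks_apply₁₁, Matrix.fromBlocks_apply₂₁,
      Matrix.add_apply, Matrix.smul_apply, Matrix.vecMulVec_apply, Pi.single_apply,
      smul_eq_mul]
    have := h1 j
    simp only [Matrix.mul_apply, Matrix.add_apply, Matrix.smul_apply,
      Matrix.vecMulVec_apply, smul_eq_mul] at this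
    rw [this]
    have hc := congrFun hcol i
    by_cases hj : j = (⟨m - 1, by omega⟩ : Fin m) <;>
      simp [hj, Finset.sum_ite_eq', hc, Pi.single_apply] <;> ring
  | inr j =>
    simp only [Matrix.mul_apply, Fintype.sum_sum_type, Matrix.of_apply, Sum.elim_inl,
      Sum.elim_inr, Matrix.fromBlocks_apply₁₂, Matrix.fromBlocks_apply₂₂,
      Matrix.add_apply, Matrix.smul_apply, Matrix.vecMulVec_apply, Pi.single_apply,
      smul_eq_mul, Matrix.zero_apply, mul_zero, Finset.sum_const_zero, zero_add]
    have := h2 j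
    simp only [Matrix.mul_apply, Matrix.add_apply, Matrix.smul_apply,
      Matrix.vecMulVec_apply, smul_eq_mul, Pi.single_apply] at this
    rw [this]
    simp [Sum.inr.injEq]
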